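/- Let ε ∈ (0,1/2], k ≥ 1, let 𝒲 be a family of channels from [2k] to finite alphabets, and let (Π, p̂) be an (n, ε/12)-estimator using 𝒲 with transcript (Y^n, U). Let Z be uniform on {−1,+1}^k and, conditionally on Z, let the n inputs be i.i.d. with law p_Z. Then Σ_{i=1}^k I(Z_i; Y^n | U) ≥ k/2, where mutual information is measured in bits. -/

import Mathlib

open Finset

namespace Paper

/-- A probability distribution on a finite type, given by its mass function. -/
def IsDist {α : Type*} [Fintype α] (p : α → ℝ) : Prop :=
  (∀ a, 0 ≤ p a) ∧ ∑ a, p a = 1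

/-- A channel (row-stochastic kernel) from `α` to the finite alphabet `𝒴`. -/
def IsChannel {α 𝒴 : Type*} [Fintype α] [Fintype 𝒴] (W : α → 𝒴 → ℝ) : Prop :=
  ∀ x, IsDist (W x)

/-- Total variation distance between mass functions on a finite type. -/
noncomputable def tvDist {α : Type*} [Fintype α] (p q : α → ℝ) : ℝ :=
  (∑ a, |p a - q a|) / 2

/-- The element `2i-1` (1-indexed) of `[2k]`, i.e. index `2i` in 0-indexed terms. -/
def lo {k : ℕ} (i : Fin k) : Fin (2 * k) := ⟨2 * i.val, by have := i.isLt; omega⟩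

/-- The element `2i` (1-indexed) of `[2k]`, i.e. index `2i+1` in 0-indexed terms. -/
def hi {k : ℕ} (i : Fin k) : Fin (2 * k) := ⟨2 * i.val + 1, by have := i.isLt; omega⟩

/-- The channel information matrix `H(W)`  (division by `0` yields `0` in Lean,
matching the convention that terms with zero denominator vanish). -/
noncomputable def HMat (k : ℕ) {𝒴 : Type*} [Fintype 𝒴] (W : Fin (2 * k) → 𝒴 → ℝ) :
    Matrix (Fin k) (Fin k) ℝ := fun i j =>
  ∑ y, (W (lo i) y - W (hi i) y) * (W (lo j) y - W (hi j) y) / (∑ x, W x y)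

/-- Nuclear norm of a real symmetric matrix (sum of absolute values of eigenvalues). -/
noncomputable def nucNorm {k : ℕ} (A : Matrix (Fin k) (Fin k) ℝ) : ℝ :=
  if h : A.IsHermitian then ∑ i, |h.eigenvalues i| else 0

/-- Operator (spectral) norm of a real symmetric matrix. -/
noncomputable def opNorm {k : ℕ} (A : Matrix (Fin k) (Fin k) ℝ) : ℝ :=
  if h : A.IsHermitian then ⨆ i, |h.eigenvalues i| else 0

/-- Frobenius norm of a matrix. -/
noncomputable def frobNorm {k : ℕ} (A : Matrix (Fin k) (Fin k) ℝ) : ℝ :=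
  Real.sqrt (∑ i, ∑ j, (A i j) ^ 2)

/-- `‖𝒲‖_*`, the maximal nuclear norm of `H(W)` over the family. -/
noncomputable def famNuc (k : ℕ) {𝒴 : Type*} [Fintype 𝒴]
    (𝒲 : Set (Fin (2 * k) → 𝒴 → ℝ)) : ℝ :=
  sSup ((fun W => nucNorm (HMat k W)) '' 𝒲)

/-- `‖𝒲‖_op`, the maximal operator norm of `H(W)` over the family. -/
noncomputable def famOp (k : ℕ) {𝒴 : Type*} [Fintype 𝒴]
    (𝒲 : Set (Fin (2 * k) → 𝒴 → ℝ)) : ℝ :=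
  sSup ((fun W => opNorm (HMat k W)) '' 𝒲)

/-- `‖𝒲‖_F`, the maximal Frobenius norm of `H(W)` over the family. -/
noncomputable def famFrob (k : ℕ) {𝒴 : Type*} [Fintype 𝒴]
    (𝒲 : Set (Fin (2 * k) → 𝒴 → ℝ)) : ℝ :=
  sSup ((fun W => frobNorm (HMat k W)) '' 𝒲)

/-- A deterministic sequentially interactive protocol over `n` users: to each user `t`
and each message prefix it assigns a channel. -/
def Protocol (k n : ℕ) (𝒴 : Type*) : Type _ :=
  (t : Fin n) → (Fin t.val → 𝒴) → Fin (2 * k) → 𝒴 → ℝ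

/-- All channels used by the protocol belong to the family `𝒲`. -/
def UsesFamily {k n : ℕ} {𝒴 : Type*} (π : Protocol k n 𝒴)
    (𝒲 : Set (Fin (2 * k) → 𝒴 → ℝ)) : Prop :=
  ∀ t pre, π t pre ∈ 𝒲

/-- All kernels used by the protocol are genuine channels. -/
def ChannelProtocol {k n : ℕ} {𝒴 : Type*} [Fintype 𝒴] (π : Protocol k n 𝒴) : Prop :=
  ∀ t pre, IsChannel (π t pre)

/-- Distribution of the first `t` messages of the transcript when the inputs are
i.i.d. with law `p`. -/
noncomputable def prefixDist {k n : ℕ} {𝒴 : Type*} [Fintype 𝒴] (π : Protocol k n 𝒴)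
    (p : Fin (2 * k) → ℝ) (t : ℕ) (ht : t ≤ n) (y : Fin t → 𝒴) : ℝ :=
  ∏ s : Fin t, ∑ x, p x *
    π ⟨s.val, lt_of_lt_of_le s.isLt ht⟩ (fun r => y ⟨r.val, lt_trans r.isLt s.isLt⟩) x (y s)

/-- Distribution of the full transcript `Y^n` when the inputs are i.i.d. with law `p`. -/
noncomputable def transDist {k n : ℕ} {𝒴 : Type*} [Fintype 𝒴] (π : Protocol k n 𝒴)
    (p : Fin (2 * k) → ℝ) (y : Fin n → 𝒴) : ℝ :=
  prefixDist π p n le_rfl y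

/-- The uniform distribution on `[2k]`. -/
noncomputable def uniform2k (k : ℕ) : Fin (2 * k) → ℝ := fun _ => (2 * (k : ℝ))⁻¹

/-- An `(n, ε)`-estimator using `𝒲`: a public-coin sequentially interactive protocol
(seed distribution `μ`, protocols `π u`, channels from `𝒲`) together with an estimator
`est` such that, for every input distribution `p`, the probability that the estimate is
more than `ε` away from `p` in total variation is at most `1/100`. -/
def IsEstimator {k n : ℕ} {𝒴 𝒰 : Type*} [Fintype 𝒴] [Fintype 𝒰]
    (𝒲 : Set (Fin (2 * k) → 𝒴 → ℝ)) (μ : 𝒰 → ℝ) (π : 𝒰 → Protocol k n 𝒴)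
    (est : (Fin n → 𝒴) → 𝒰 → Fin (2 * k) → ℝ) (ε : ℝ) : Prop :=
  IsDist μ ∧ (∀ u, UsesFamily (π u) 𝒲) ∧ (∀ u, ChannelProtocol (π u)) ∧
  (∀ y u, IsDist (est y u)) ∧
  ∀ p : Fin (2 * k) → ℝ, IsDist p →
    (∑ u, ∑ y : Fin n → 𝒴, μ u * (transDist (π u) p y *
      (if ε < tvDist (est y u) p then (1 : ℝ) else 0))) ≤ 1 / 100

/-- An `(n, ε)`-uniformity test using `𝒲`: a public-coin sequentially interactive
protocol together with a randomized decision rule `T` (probability of output `1`)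
accepting uniform and rejecting `ε`-far distributions with probability `99/100`. -/
def IsUnifTest {k n : ℕ} {𝒴 𝒰 : Type*} [Fintype 𝒴] [Fintype 𝒰]
    (𝒲 : Set (Fin (2 * k) → 𝒴 → ℝ)) (μ : 𝒰 → ℝ) (π : 𝒰 → Protocol k n 𝒴)
    (T : (Fin n → 𝒴) → 𝒰 → ℝ) (ε : ℝ) : Prop :=
  IsDist μ ∧ (∀ u, UsesFamily (π u) 𝒲) ∧ (∀ u, ChannelProtocol (π u)) ∧
  (∀ y u, T y u ∈ Set.Icc (0 : ℝ) 1) ∧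
  (99 / 100 ≤ ∑ u, ∑ y : Fin n → 𝒴, μ u * (transDist (π u) (uniform2k k) y * (1 - T y u))) ∧
  ∀ p : Fin (2 * k) → ℝ, IsDist p → ε ≤ tvDist p (uniform2k k) →
    99 / 100 ≤ ∑ u, ∑ y : Fin n → 𝒴, μ u * (transDist (π u) p y * T y u)

/-- Mutual information (in nats) of a joint mass function on `A × B`. -/
noncomputable def miNats {A B : Type*} [Fintype A] [Fintype B] (j : A → B → ℝ) : ℝ :=
  ∑ a, ∑ b, j a b * Real.log (j a b / ((∑ b', j a b') * (∑ a', j a' b)))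

/-- Mutual information (in bits) of a joint mass function on `A × B`. -/
noncomputable def miBits {A B : Type*} [Fintype A] [Fintype B] (j : A → B → ℝ) : ℝ :=
  ∑ a, ∑ b, j a b * Real.logb 2 (j a b / ((∑ b', j a b') * (∑ a', j a' b)))

/-- Binary entropy function (in bits). -/
noncomputable def binEnt (t : ℝ) : ℝ :=
  -(t * Real.logb 2 t) - (1 - t) * Real.logb 2 (1 - t)

/-- `±1` encoding of a Boolean. -/
def pm (b : Bool) : ℝ := if b then 1 else -1

/-- The joint mass function of `(Z_i, Y)` obtained from a joint mass function of `(Z, Y)`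
for `Z ∈ {−1,+1}^k` (encoded via Booleans). -/
noncomputable def coordJoint {k : ℕ} {𝒴 : Type*} [Fintype 𝒴]
    (j : (Fin k → Bool) → 𝒴 → ℝ) (i : Fin k) : Bool → 𝒴 → ℝ :=
  fun b y => ∑ z : Fin k → Bool, if z i = b then j z y else 0

/-- The Paninski perturbation `p_z` of the uniform distribution on `[2k]`:
`p_z(2i−1) = (1+2ε z_i)/(2k)` and `p_z(2i) = (1−2ε z_i)/(2k)` (1-indexed). -/
noncomputable def paninski (k : ℕ) (ε : ℝ) (z : Fin k → Bool) : Fin (2 * k) → ℝ :=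
  fun x => (1 + (if x.val % 2 = 0 then (1 : ℝ) else -1) * (2 * ε) *
    pm (z ⟨x.val / 2, by have := x.isLt; omega⟩)) / (2 * k)

/-- Chi-square divergence between mass functions on a finite type. -/
noncomputable def chiSq {α : Type*} [Fintype α] (P Q : α → ℝ) : ℝ :=
  ∑ y, (P y - Q y) ^ 2 / Q y

/-- Kullback–Leibler divergence (in nats) between mass functions on a finite type. -/
noncomputable def klDivNats {α : Type*} [Fintype α] (P Q : α → ℝ) : ℝ :=
  ∑ y, P y * Real.log (P y / Q y)

/-- The leaky-query channel `W_u^η` on output alphabet `[2k] ∪ {1*, 0*}`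
(`Sum.inr true = 1*`, `Sum.inr false = 0*`). -/
noncomputable def leaky (k : ℕ) (η : ℝ) (u : Fin (2 * k) → ℝ) :
    Fin (2 * k) → (Fin (2 * k) ⊕ Bool) → ℝ :=
  fun x y => Sum.elim (fun x' => if x' = x then η else 0)
    (fun b => if b then (1 - η) * u x else (1 - η) * (1 - u x)) y

/-- The vector `δ(u)` associated with a leaky-query channel. -/
noncomputable def leakyDelta (k : ℕ) (u : Fin (2 * k) → ℝ) : Fin k → ℝ :=
  fun i => (u (lo i) - u (hi i)) *
    Real.sqrt ((2 * (k : ℝ)) / ((∑ x, u x) * (2 * (k : ℝ) - ∑ x, u x)))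

/-- The partial-erasure channel `W_{x*}` on output alphabet `[2k] ∪ {⊥}`. -/
noncomputable def eraseCh (k : ℕ) (η : ℝ) (xs : Fin (2 * k)) :
    Fin (2 * k) → (Fin (2 * k) ⊕ Unit) → ℝ :=
  fun x y => Sum.elim (fun x' => if x' = x then (if x = xs then 1 else η) else 0)
    (fun _ => if x = xs then 0 else 1 - η) y

/-- The family of all `ρ`-locally differentially private channels from `[2k]` to `𝒴`. -/
def ldpFamily (k : ℕ) {𝒴 : Type*} [Fintype 𝒴] (ρ : ℝ) :
    Set (Fin (2 * k) → 𝒴 → ℝ) :=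
  { W | IsChannel W ∧ ∀ x x' y, W x y ≤ Real.exp ρ * W x' y }

/-!
Assouad's method combined with Fano's inequality. Read off a sign vector from the estimate by
comparing its masses on `2i - 1` and `2i`: every wrong sign costs `2ε/k` in total variation, so an
`ε/12`-accurate estimate gets at most `k/12` signs wrong, and the expected number of wrong signs is
at most `k/100 + k/12 = 7k/75`. For each coordinate, Fano's inequality for the uniform bit `Z_i`
gives `I(Z_i; Y^n | U = u) ≥ 1 - h(P_err(i, u))`; by concavity and monotonicity of the binary
entropy `h`, the `μ`-weighted sum over `i` and `u` of `h(P_err(i, u))` is at most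
`k h(7/75) ≤ k/2`.
-/

section BinaryEntropy

open Real

lemma binEnt_eq_binEntropy_div (t : ℝ) : binEnt t = binEntropy t / log 2 := by
  rw [binEnt, binEntropy, logb, logb, log_inv, log_inv]
  ring

lemma concaveOn_binEnt : ConcaveOn ℝ (Set.Icc 0 1) binEnt := by
  refine (strictConcave_binEntropy.concaveOn.smul
    (inv_nonneg.mpr (log_nonneg one_le_two))).congr fun t _ => ?_
  simp only [binEnt_eq_binEntropy_div, smul_eq_mul, div_eq_inv_mul]

lemma monotoneOn_binEnt : MonotoneOn binEnt (Set.Icc 0 2⁻¹) := fun a ha b hb hab => by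
  rw [binEnt_eq_binEntropy_div, binEnt_eq_binEntropy_div]
  gcongr
  exact binEntropy_strictMonoOn.monotoneOn ha hb hab

lemma binEnt_seven_div_seventyFive_le : binEnt (7 / 75) ≤ 1 / 2 := by
  rw [binEnt_eq_binEntropy_div, div_le_iff₀ (log_pos one_lt_two)]
  have h68 : log (75 / 68) ≤ 7 / 68 := by
    linarith [log_le_sub_one_of_pos (show (0 : ℝ) < 75 / 68 by norm_num)]
  have h56 : log (75 / 56) ≤ 19 / 56 := by
    linarith [log_le_sub_one_of_pos (show (0 : ℝ) < 75 / 56 by norm_num)]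
  have h7 : log (75 / 7) = 3 * log 2 + log (75 / 56) := by
    rw [show (75 / 7 : ℝ) = 2 ^ 3 * (75 / 56) by norm_num, log_mul (by norm_num) (by norm_num),
      log_pow, Nat.cast_ofNat]
  have hH : binEntropy (7 / 75) = 7 / 75 * log (75 / 7) + 68 / 75 * log (75 / 68) := by
    rw [binEntropy]; norm_num
  rw [hH, h7]
  nlinarith [log_two_gt_d9]

lemma sum_mul_binEnt_le {ι : Type*} (s : Finset ι) (w e : ι → ℝ) (hw : ∀ i ∈ s, 0 ≤ w i)
    (he : ∀ i ∈ s, e i ∈ Set.Icc 0 1) {δ : ℝ} (hδ : δ ≤ 2⁻¹)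
    (hmean : ∑ i ∈ s, w i * e i ≤ δ * ∑ i ∈ s, w i) :
    ∑ i ∈ s, w i * binEnt (e i) ≤ (∑ i ∈ s, w i) * binEnt δ := by
  rcases (sum_nonneg hw).eq_or_lt with hw0 | hwpos
  · rw [← hw0, zero_mul]
    exact (sum_eq_zero fun i hi => by
      rw [(sum_eq_zero_iff_of_nonneg hw).mp hw0.symm i hi, zero_mul]).le
  have hJensen := concaveOn_binEnt.le_map_centerMass hw hwpos he
  have hcm : s.centerMass w e ∈ Set.Icc 0 δ := by
    refine ⟨(convex_Icc 0 1).centerMass_mem hw hwpos he |>.1, ?_⟩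
    rw [centerMass, smul_eq_mul, inv_mul_le_iff₀ hwpos, mul_comm]
    simpa [smul_eq_mul] using hmean
  have hδ0 : 0 ≤ δ := hcm.1.trans hcm.2
  have hmono := monotoneOn_binEnt ⟨hcm.1, hcm.2.trans hδ⟩ ⟨hδ0, hδ⟩ hcm.2
  have h := hJensen.trans hmono
  rw [centerMass, smul_eq_mul, inv_mul_le_iff₀ hwpos] at h
  simpa [smul_eq_mul] using h

end BinaryEntropy

section Fano

open Real

lemma mul_logb_div_half_mul (u q : ℝ) (hu : 0 ≤ u) (hq : 0 < q) :
    u * logb 2 (u / (1 / 2 * q)) = u + u * logb 2 (u / q) := by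
  rcases hu.eq_or_lt with rfl | hu
  · simp
  rw [show u / (1 / 2 * q) = 2 * (u / q) by field_simp, logb_mul two_ne_zero (by positivity),
    logb_self_eq_one one_lt_two]
  ring

lemma sum_mul_logb_div_half_sum (f : Bool → ℝ) (hf : ∀ b, 0 ≤ f b) (c : Bool) :
    ∑ b, f b * logb 2 (f b / (1 / 2 * ∑ b', f b')) =
      (∑ b, f b) * (1 - binEnt (f c / ∑ b, f b)) := by
  set q := ∑ b, f b with hq_def
  clear_value q
  have hq : 0 ≤ q := hq_def ▸ sum_nonneg fun b _ => hf b
  rcases hq.eq_or_lt with hq | hq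
  · have hf0 : ∀ b, f b = 0 :=
      congrFun ((Fintype.sum_eq_zero_iff_of_nonneg hf).mp (hq_def ▸ hq.symm))
    simp [hf0, ← hq]
  simp only [mul_logb_div_half_mul _ _ (hf _) hq, sum_add_distrib]
  have hsplit : f (!c) / q = 1 - f c / q := by
    rw [eq_sub_iff_add_eq, ← add_div, div_eq_one_iff_eq hq.ne']
    cases c <;> simp [hq_def, add_comm]
  have hc : ∑ b, f b * logb 2 (f b / q) =
      f c * logb 2 (f c / q) + f (!c) * logb 2 (f (!c) / q) := by
    cases c <;> simp [add_comm]
  have hqc : q * (f c / q) = f c := mul_div_cancel₀ _ hq.ne'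
  have hqnc : q * (1 - f c / q) = f (!c) := by
    rw [← hsplit, mul_div_cancel₀ _ hq.ne']
  rw [hc, hsplit, binEnt, ← hq_def]
  linear_combination -logb 2 (f c / q) * hqc - logb 2 (1 - f c / q) * hqnc

variable {B : Type*} [Fintype B] (j : Bool → B → ℝ)

lemma sum_sum_bool_eq_one (hmarg : ∀ b, ∑ y, j b y = 1 / 2) : ∑ y, ∑ b, j b y = 1 := by
  rw [sum_comm, Fintype.sum_bool, hmarg, hmarg]
  norm_num

lemma sum_select_le_one (hj : ∀ b y, 0 ≤ j b y) (hmarg : ∀ b, ∑ y, j b y = 1 / 2)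
    (c : B → Bool) : ∑ y, j (c y) y ≤ 1 :=
  (sum_le_sum fun y _ => single_le_sum (fun b _ => hj b y) (mem_univ (c y))).trans
    (sum_sum_bool_eq_one j hmarg).le

lemma miBits_eq_sum_mul_one_sub_binEnt (hj : ∀ b y, 0 ≤ j b y)
    (hmarg : ∀ b, ∑ y, j b y = 1 / 2) (c : B → Bool) :
    miBits j = ∑ y, (∑ b, j b y) * (1 - binEnt (j (c y) y / ∑ b, j b y)) := by
  rw [miBits, sum_comm]
  simp only [hmarg]
  exact sum_congr rfl fun y _ => sum_mul_logb_div_half_sum (j · y) (hj · y) (c y)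

/-- Fano's inequality: `∑ y, j (!g y) y` is the probability that `g` guesses the uniform bit
wrongly. -/
theorem one_sub_binEnt_le_miBits (hj : ∀ b y, 0 ≤ j b y) (hmarg : ∀ b, ∑ y, j b y = 1 / 2)
    (g : B → Bool) : 1 - binEnt (∑ y, j (!g y) y) ≤ miBits j := by
  set q : B → ℝ := fun y => ∑ b, j b y
  have hq : ∀ y, 0 ≤ q y := fun y => sum_nonneg fun b _ => hj b y
  have hle : ∀ y, j (!g y) y ≤ q y := fun y => single_le_sum (fun b _ => hj b y) (mem_univ _)
  have hmass : ∀ y, q y * (j (!g y) y / q y) = j (!g y) y := fun y => by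
    rcases (hq y).eq_or_lt with h | h
    · rw [← h, le_antisymm (h ▸ hle y) (hj _ _), zero_mul]
    · exact mul_div_cancel₀ _ h.ne'
  have hJensen := concaveOn_binEnt.le_map_sum (t := univ) (w := q)
    (p := fun y => j (!g y) y / q y) (fun y _ => hq y) (sum_sum_bool_eq_one j hmarg)
    fun y _ => ⟨div_nonneg (hj _ _) (hq y), div_le_one_of_le₀ (hle y) (hq y)⟩
  simp only [smul_eq_mul, hmass] at hJensen
  rw [miBits_eq_sum_mul_one_sub_binEnt j hj hmarg (fun y => !g y)]
  simp only [mul_sub, mul_one, sum_sub_distrib, sum_sum_bool_eq_one j hmarg]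
  linarith

end Fano

section Transcript

variable {k n : ℕ} {𝒴 : Type*} [Fintype 𝒴] {π : Protocol k n 𝒴} {p : Fin (2 * k) → ℝ}

lemma prefixDist_nonneg (hπ : ChannelProtocol π) (hp : IsDist p) (t : ℕ) (ht : t ≤ n)
    (y : Fin t → 𝒴) : 0 ≤ prefixDist π p t ht y :=
  prod_nonneg fun _ _ => sum_nonneg fun x _ => mul_nonneg (hp.1 x) ((hπ _ _ x).1 _)

lemma prefixDist_snoc (t : ℕ) (ht : t + 1 ≤ n) (y : Fin t → 𝒴) (a : 𝒴) :
    prefixDist π p (t + 1) ht (Fin.snoc y a) =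
      prefixDist π p t (by omega) y * ∑ x, p x * π ⟨t, ht⟩ (fun r => y ⟨r, r.isLt⟩) x a := by
  unfold prefixDist
  rw [Fin.prod_univ_castSucc]
  congr 1
  · refine prod_congr rfl fun s _ => sum_congr rfl fun x _ => ?_
    simp only [Fin.snoc_castSucc, Fin.val_castSucc]
    congr 2
    funext r
    simp [Fin.snoc, lt_trans r.isLt s.isLt]
  · simp [Fin.snoc]

lemma sum_prefixDist (hπ : ChannelProtocol π) (hp : IsDist p) (t : ℕ) (ht : t ≤ n) :
    ∑ y, prefixDist π p t ht y = 1 := by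
  induction t with
  | zero => simp [prefixDist]
  | succ t ih =>
    rw [← (Fin.snocEquiv fun _ => 𝒴).sum_comp, Fintype.sum_prod_type_right]
    refine (sum_congr rfl fun y _ => ?_).trans (ih (by omega))
    have hout : ∑ a, ∑ x, p x * π ⟨t, ht⟩ (fun r => y ⟨r, r.isLt⟩) x a = 1 := by
      rw [sum_comm, ← hp.2]
      exact sum_congr rfl fun x _ => by rw [← mul_sum, (hπ _ _ x).2, mul_one]
    simp only [Fin.snocEquiv, Equiv.coe_fn_mk, prefixDist_snoc, ← mul_sum, hout, mul_one]

lemma isDist_transDist (hπ : ChannelProtocol π) (hp : IsDist p) : IsDist (transDist π p) :=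
  ⟨prefixDist_nonneg hπ hp n le_rfl, sum_prefixDist hπ hp n le_rfl⟩

end Transcript

section Paninski

variable {k : ℕ} {ε : ℝ}

lemma sum_fin_two_mul {M : Type*} [AddCommMonoid M] (f : Fin (2 * k) → M) :
    ∑ x, f x = ∑ i, (f (lo i) + f (hi i)) := by
  rw [← (finProdFinEquiv.trans (finCongr (mul_comm k 2))).sum_comp, Fintype.sum_prod_type]
  refine sum_congr rfl fun i _ => ?_
  rw [Fin.sum_univ_two]
  congr 2 <;> ext <;> simp [lo, hi, finProdFinEquiv, add_comm]

lemma exists_eq_lo_or_eq_hi (x : Fin (2 * k)) : ∃ i, x = lo i ∨ x = hi i :=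
  ⟨⟨x / 2, by omega⟩, by simp only [lo, hi, Fin.ext_iff]; omega⟩

lemma paninski_lo (z : Fin k → Bool) (i : Fin k) :
    paninski k ε z (lo i) = (1 + 2 * ε * pm (z i)) / (2 * k) := by
  simp only [paninski, lo, Nat.mul_mod_right, Nat.mul_div_cancel_left _ two_pos]
  norm_num

lemma paninski_hi (z : Fin k → Bool) (i : Fin k) :
    paninski k ε z (hi i) = (1 - 2 * ε * pm (z i)) / (2 * k) := by
  have hmod : (2 * i.val + 1) % 2 = 1 := by omega
  have hdiv : (2 * i.val + 1) / 2 = i.val := by omega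
  simp only [paninski, hi, hmod, hdiv]
  norm_num
  ring

lemma isDist_paninski (hk : 1 ≤ k) (hε : 0 ≤ ε) (hε' : ε ≤ 1 / 2) (z : Fin k → Bool) :
    IsDist (paninski k ε z) := by
  have hpm : ∀ i, -1 ≤ 2 * ε * pm (z i) ∧ 2 * ε * pm (z i) ≤ 1 := fun i => by
    cases z i <;> constructor <;> simp only [pm] <;> norm_num <;> linarith
  refine ⟨fun x => ?_, ?_⟩
  · obtain ⟨i, rfl | rfl⟩ := exists_eq_lo_or_eq_hi x
    · rw [paninski_lo]
      exact div_nonneg (by linarith [(hpm i).1, (hpm i).2]) (by positivity)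
    · rw [paninski_hi]
      exact div_nonneg (by linarith [(hpm i).1, (hpm i).2]) (by positivity)
  · have hk' : (k : ℝ) ≠ 0 := by positivity
    simp only [sum_fin_two_mul, paninski_lo, paninski_hi, ← add_div, add_add_sub_cancel,
      sum_const, card_univ, Fintype.card_fin, nsmul_eq_mul]
    field_simp
    norm_num

noncomputable def signDecode (q : Fin (2 * k) → ℝ) : Fin k → Bool :=
  fun i => decide (q (hi i) < q (lo i))

lemma two_mul_div_le_of_signDecode_ne (q : Fin (2 * k) → ℝ) {z : Fin k → Bool} {i : Fin k}
    (h : signDecode q i ≠ z i) :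
    2 * ε / k ≤ |q (lo i) - paninski k ε z (lo i)| + |q (hi i) - paninski k ε z (hi i)| := by
  have hgap : paninski k ε z (lo i) - paninski k ε z (hi i) = 2 * ε / k * pm (z i) := by
    rw [paninski_lo, paninski_hi]
    ring
  have := le_abs_self (q (lo i) - paninski k ε z (lo i))
  have := neg_abs_le (q (lo i) - paninski k ε z (lo i))
  have := le_abs_self (q (hi i) - paninski k ε z (hi i))
  have := neg_abs_le (q (hi i) - paninski k ε z (hi i))
  cases hz : z i <;> simp [signDecode, hz, pm] at h hgap <;> linarith

lemma div_mul_hammingDist_signDecode_le (q : Fin (2 * k) → ℝ) (z : Fin k → Bool) :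
    ε / k * hammingDist (signDecode q) z ≤ tvDist q (paninski k ε z) := by
  rw [hammingDist, natCast_card_filter, tvDist, sum_fin_two_mul, mul_sum, le_div_iff₀ two_pos,
    sum_mul]
  refine sum_le_sum fun i _ => ?_
  split_ifs with h
  · calc ε / k * 1 * 2 = 2 * ε / k := by ring
      _ ≤ _ := two_mul_div_le_of_signDecode_ne q h
  · simp only [mul_zero, zero_mul]
    positivity

lemma hammingDist_signDecode_le (hk : 0 < k) (hε : 0 < ε) (q : Fin (2 * k) → ℝ)
    (z : Fin k → Bool) :
    (hammingDist (signDecode q) z : ℝ) ≤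
      k * (if ε / 12 < tvDist q (paninski k ε z) then 1 else 0) + k / 12 := by
  have hk' : (0 : ℝ) < k := by exact_mod_cast hk
  split_ifs with h
  · have : (hammingDist (signDecode q) z : ℝ) ≤ k := by
      exact_mod_cast (hammingDist_le_card_fintype.trans_eq (Fintype.card_fin k))
    linarith
  · have := (div_mul_hammingDist_signDecode_le q z).trans (not_lt.mp h)
    rw [div_mul_eq_mul_div, div_le_iff₀ hk'] at this
    nlinarith

end Paninski

section Mixture

variable {k : ℕ} {B : Type*} [Fintype B]

lemma coordJoint_nonneg {J : (Fin k → Bool) → B → ℝ} (hJ : ∀ z y, 0 ≤ J z y) (i : Fin k)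
    (b : Bool) (y : B) : 0 ≤ coordJoint J i b y :=
  sum_nonneg fun z _ => by split_ifs; exacts [hJ z y, le_rfl]

lemma sum_coordJoint_uniform_mixture (Q : (Fin k → Bool) → B → ℝ) (hQ : ∀ z, ∑ y, Q z y = 1)
    (i : Fin k) (b : Bool) :
    ∑ y, coordJoint (fun z y => (1 / 2 ^ k : ℝ) * Q z y) i b y = 1 / 2 := by
  have hcard : #{z : Fin k → Bool | z i = b} = 2 ^ (k - 1) := by
    rw [← Fintype.piFinset_univ, Fintype.card_filter_piFinset_const_eq_of_mem _ _ (mem_univ b),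
      card_univ, Fintype.card_bool, Fintype.card_fin]
  have hk : k = k - 1 + 1 := by have := i.isLt; omega
  calc ∑ y, coordJoint (fun z y => (1 / 2 ^ k : ℝ) * Q z y) i b y
      = ∑ z : Fin k → Bool, if z i = b then (1 / 2 ^ k : ℝ) else 0 := by
        simp only [coordJoint]
        rw [sum_comm]
        refine sum_congr rfl fun z _ => ?_
        split_ifs <;> simp [← mul_sum, hQ]
    _ = 1 / 2 := by
        rw [← sum_filter, sum_const, hcard, nsmul_eq_mul, hk, pow_succ]
        push_cast
        field_simp

lemma sum_sum_coordJoint_not_eq (J : (Fin k → Bool) → B → ℝ) (g : B → Fin k → Bool) :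
    ∑ i, ∑ y, coordJoint J i (!g y i) y = ∑ z, ∑ y, J z y * hammingDist (g y) z := by
  have hflip : ∀ a c : Bool, (a = !c) ↔ (c ≠ a) := by decide
  simp only [coordJoint, hflip, hammingDist, natCast_card_filter, mul_sum, mul_ite, mul_one,
    mul_zero]
  rw [sum_comm]
  simp only [sum_comm (s := univ (α := Fin k))]
  rw [sum_comm]

end Mixture

section Estimator

variable {k n : ℕ} {𝒴 𝒰 : Type*} [Fintype 𝒴] [Fintype 𝒰] {𝒲 : Set (Fin (2 * k) → 𝒴 → ℝ)}
  {μ : 𝒰 → ℝ} {π : 𝒰 → Protocol k n 𝒴} {est : (Fin n → 𝒴) → 𝒰 → Fin (2 * k) → ℝ} {ε : ℝ}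

lemma expected_hammingDist_signDecode_le (hk : 1 ≤ k) (hε : 0 < ε) (hε' : ε ≤ 1 / 2)
    (hEst : IsEstimator 𝒲 μ π est (ε / 12)) (z : Fin k → Bool) :
    ∑ u, ∑ y, μ u * (transDist (π u) (paninski k ε z) y *
      hammingDist (signDecode (est y u)) z) ≤ 7 / 75 * k := by
  obtain ⟨hμ, -, hπ, -, hacc⟩ := hEst
  have hp := isDist_paninski hk hε.le hε' z
  have hmass : ∑ u, μ u * ∑ y, transDist (π u) (paninski k ε z) y = 1 := by
    simp only [(isDist_transDist (hπ _) hp).2, mul_one, hμ.2]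
  calc _ ≤ ∑ u, ∑ y, (k * (μ u * (transDist (π u) (paninski k ε z) y *
          (if ε / 12 < tvDist (est y u) (paninski k ε z) then 1 else 0))) +
          k / 12 * (μ u * transDist (π u) (paninski k ε z) y)) := by
        refine sum_le_sum fun u _ => sum_le_sum fun y _ => ?_
        have := mul_le_mul_of_nonneg_left (hammingDist_signDecode_le hk hε (est y u) z)
          (mul_nonneg (hμ.1 u) ((isDist_transDist (hπ u) hp).1 y))
        linarith
    _ = k * ∑ u, ∑ y, μ u * (transDist (π u) (paninski k ε z) y *
          (if ε / 12 < tvDist (est y u) (paninski k ε z) then 1 else 0)) + k / 12 * 1 := by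
        simp only [sum_add_distrib, ← mul_sum, hmass]
    _ ≤ k * (1 / 100) + k / 12 * 1 := by gcongr; exact hacc _ hp
    _ = 7 / 75 * k := by ring

lemma sum_sum_mul_decodingError_le (hk : 1 ≤ k) (hε : 0 < ε) (hε' : ε ≤ 1 / 2)
    (hEst : IsEstimator 𝒲 μ π est (ε / 12)) :
    ∑ i, ∑ u, μ u * ∑ y, coordJoint (fun z y => (1 / 2 ^ k : ℝ) *
      transDist (π u) (paninski k ε z) y) i (!signDecode (est y u) i) y ≤ 7 / 75 * k := by
  calc _ = ∑ u, μ u * ∑ z, ∑ y, (1 / 2 ^ k : ℝ) * transDist (π u) (paninski k ε z) y *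
        hammingDist (signDecode (est y u)) z := by
        rw [sum_comm]
        simp only [← mul_sum, sum_sum_coordJoint_not_eq]
    _ = ∑ z : Fin k → Bool, (1 / 2 ^ k : ℝ) * ∑ u, ∑ y, μ u *
        (transDist (π u) (paninski k ε z) y * hammingDist (signDecode (est y u)) z) := by
        simp only [mul_sum]
        rw [sum_comm]
        exact sum_congr rfl fun z _ => sum_congr rfl fun u _ => sum_congr rfl fun y _ => by ring
    _ ≤ ∑ z : Fin k → Bool, (1 / 2 ^ k : ℝ) * (7 / 75 * k) := by
        gcongr with z
        exact expected_hammingDist_signDecode_le hk hε hε' hEst z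
    _ = 7 / 75 * k := by
        simp only [sum_const, card_univ, Fintype.card_fun, Fintype.card_bool, Fintype.card_fin,
          nsmul_eq_mul]
        push_cast
        field_simp

end Estimator

theorem assouad_bound_general
    (k n : ℕ) (hk : 1 ≤ k) (ε : ℝ) (hε : 0 < ε) (hε' : ε ≤ 1 / 2)
    (𝒴 𝒰 : Type) [Fintype 𝒴] [Fintype 𝒰]
    (𝒲 : Set (Fin (2 * k) → 𝒴 → ℝ))
    (μ : 𝒰 → ℝ) (π : 𝒰 → Protocol k n 𝒴)
    (est : (Fin n → 𝒴) → 𝒰 → Fin (2 * k) → ℝ)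
    (hEst : IsEstimator 𝒲 μ π est (ε / 12)) :
    (k : ℝ) / 2 ≤ ∑ i : Fin k, ∑ u, μ u *
      miBits (coordJoint
        (fun z y => (1 / 2 ^ k : ℝ) * transDist (π u) (paninski k ε z) y) i) := by
  set J : 𝒰 → (Fin k → Bool) → (Fin n → 𝒴) → ℝ :=
    fun u z y => (1 / 2 ^ k : ℝ) * transDist (π u) (paninski k ε z) y
  have hQ u z : IsDist (transDist (π u) (paninski k ε z)) :=
    isDist_transDist (hEst.2.2.1 u) (isDist_paninski hk hε.le hε' z)
  have hj u : ∀ i b y, 0 ≤ coordJoint (J u) i b y :=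
    coordJoint_nonneg fun z y => mul_nonneg (by positivity) ((hQ u z).1 y)
  have hmarg u : ∀ i b, ∑ y, coordJoint (J u) i b y = 1 / 2 :=
    sum_coordJoint_uniform_mixture _ fun z => (hQ u z).2
  set err : Fin k × 𝒰 → ℝ :=
    fun iu => ∑ y, coordJoint (J iu.2) iu.1 (!signDecode (est y iu.2) iu.1) y
  have herr iu : err iu ∈ Set.Icc 0 1 :=
    ⟨sum_nonneg fun y _ => hj _ _ _ _, sum_select_le_one _ (hj _ _) (hmarg _ _) _⟩
  have hweight : ∑ iu : Fin k × 𝒰, μ iu.2 = k := by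
    simp [Fintype.sum_prod_type, hEst.1.2]
  have hmean : ∑ iu, μ iu.2 * err iu ≤ 7 / 75 * ∑ iu : Fin k × 𝒰, μ iu.2 := by
    simpa only [hweight, Fintype.sum_prod_type] using
      sum_sum_mul_decodingError_le hk hε hε' hEst
  have hent := sum_mul_binEnt_le univ (fun iu => μ iu.2) err (fun iu _ => hEst.1.1 iu.2)
    (fun iu _ => herr iu) (by norm_num) hmean
  rw [hweight] at hent
  calc (k : ℝ) / 2 ≤ ∑ iu : Fin k × 𝒰, μ iu.2 * (1 - binEnt (err iu)) := by
        simp only [mul_sub, mul_one, sum_sub_distrib, hweight]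
        linarith [mul_le_mul_of_nonneg_left binEnt_seven_div_seventyFive_le k.cast_nonneg]
    _ ≤ ∑ iu : Fin k × 𝒰, μ iu.2 * miBits (coordJoint (J iu.2) iu.1) :=
        sum_le_sum fun iu _ => mul_le_mul_of_nonneg_left
          (one_sub_binEnt_le_miBits _ (hj _ _) (hmarg _ _) _) (hEst.1.1 iu.2)
    _ = _ := Fintype.sum_prod_type _

/-- Assouad-type bound: if `(Π, est)` is an `(n, ε/12)`-estimator
using `𝒲`, `Z` is uniform on `{−1,+1}^k` and, given `Z`, the inputs are i.i.d. `p_Z`,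
then `Σᵢ I(Z_i; Y^n | U) ≥ k/2` (information in bits). -/
theorem assouad_bound
    (k n : ℕ) (hk : 1 ≤ k) (ε : ℝ) (hε : 0 < ε) (hε' : ε ≤ 1 / 2)
    (𝒴 𝒰 : Type) [Fintype 𝒴] [Fintype 𝒰]
    (𝒲 : Set (Fin (2 * k) → 𝒴 → ℝ)) (h𝒲 : ∀ W ∈ 𝒲, IsChannel W)
    (μ : 𝒰 → ℝ) (π : 𝒰 → Protocol k n 𝒴)
    (est : (Fin n → 𝒴) → 𝒰 → Fin (2 * k) → ℝ)
    (hEst : IsEstimator 𝒲 μ π est (ε / 12)) :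
    (k : ℝ) / 2 ≤ ∑ i : Fin k, ∑ u, μ u *
      miBits (coordJoint
        (fun z y => (1 / 2 ^ k : ℝ) * transDist (π u) (paninski k ε z) y) i) :=
  assouad_bound_general k n hk ε hε hε' 𝒴 𝒰 𝒲 μ π est hEst

end Paper
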